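/- arXiv:1905.10041 — 3 statements merged into one kernel-verified Lean document; each statement's English description precedes it below -/
import Mathlib

section
/- Let σ > 0 and B > 0 with ⟨ψ(x), ψ(x)⟩ ≤ B for all x ∈ X, and set C₃ = 8B / log(1 + B·σ⁻²). Let h(x) = ⟨w_h, ψ(x)⟩ for some w_h ∈ H′, let g : X → ℝ satisfy |g(x)| ≤ G·σ for all x ∈ X with G ≥ 0, and set f = h − g. Let x* ∈ X satisfy f(x*) ≥ f(x) for all x ∈ X. Suppose points x₁, …, x_T ∈ X are chosen so that x*, x₁, …, x_T are pairwise distinct and for every t ∈ {1,…,T}, x_t maximizes the acquisition function, i.e. m̂_{t−1}(x_t) + ‖w_h‖·σ̂_{t−1}(x_t) ≥ m̂_{t−1}(x) + ‖w_h‖·σ̂_{t−1}(x) for all x ∈ X. If γ ∈ ℝ satisfies (1/2)·log det(I_T + σ⁻² K_T) ≤ γ, where K_T is the Gram matrix (k(x_i,x_j))_{i,j≤T} of the selected points, then Σ_{t=1}^T (f(x*) − f(x_t)) ≤ ‖w_h‖·√(T·C₃·γ) + 2T·(‖w_h‖ + G)·σ, and f(x*) − max_{1≤t≤T} f(x_t)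 ≤ ‖w_h‖·√(C₃·γ/T) + 2·(‖w_h‖ + G)·σ. -/
/-!
Write `c = (K_t + σ²I)⁻¹ k_t(a)`, so that `m̂_t(a) = Σ cᵢ h(xᵢ)`. Since `ψ` adds an independent
`σ²δ` to the kernel, for a point `a` outside `x₁, …, x_t` the residual `h(a) - m̂_t(a)` equals
`⟪w_h, ψ(a) - Σ cᵢ ψ(xᵢ)⟫`, and the normal equations for `c` give
`‖ψ(a) - Σ cᵢ ψ(xᵢ)‖² = σ̂_t²(a) + σ²`.
This confidence bound `|h - m̂_t| ≤ ‖w_h‖ (σ̂_t + σ)`, applied at `x*` and at `x_t`, and the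
acquisition rule bound the regret at step `t` by `2‖w_h‖ σ̂_{t-1}(x_t) + 2(‖w_h‖ + G)σ`.
Schur complements factor `det(K_T + σ²I)` as `∏ₜ (σ² + σ̂_{t-1}²(x_t))`, so the information gain is
`½ Σₜ log(1 + σ⁻² σ̂_{t-1}²(x_t))`; concavity of `s ↦ log(1 + σ⁻² s)` on `[0, B]` and Cauchy–Schwarz
then bound `Σₜ σ̂_{t-1}(x_t)` by `√(T C₃ γ) / 2`.
-/

open scoped RealInnerProductSpace
open Matrix

noncomputable section

variable {X : Type*} {H : Type*} {H' : Type*}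
  [NormedAddCommGroup H] [InnerProductSpace ℝ H]
  [NormedAddCommGroup H'] [InnerProductSpace ℝ H']

/-- The kernel associated with the feature map `φ`: `k(x,y) = ⟪φ(x), φ(y)⟫`. -/
def ker (φ : X → H) (x y : X) : ℝ := ⟪φ x, φ y⟫

/-- Gram matrix of the points `xs`. -/
def gram (φ : X → H) {t : ℕ} (xs : Fin t → X) : Matrix (Fin t) (Fin t) ℝ :=
  Matrix.of fun i j => ker φ (xs i) (xs j)

/-- The vector `k_t(a) = (k(a,x₁),…,k(a,x_t))ᵀ`. -/
def kvec (φ : X → H) {t : ℕ} (xs : Fin t → X) (a : X) : Fin t → ℝ :=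
  fun i => ker φ a (xs i)

/-- Regularized mean prediction `m̂_t(a) = k_t(a)ᵀ (K_t + σ²I)⁻¹ (h(x₁),…,h(x_t))ᵀ`. -/
def rmeanFn (σ : ℝ) (φ : X → H) (hfun : X → ℝ) {t : ℕ} (xs : Fin t → X) (a : X) : ℝ :=
  kvec φ xs a ⬝ᵥ ((gram φ xs + σ ^ 2 • 1)⁻¹ *ᵥ (fun i => hfun (xs i)))

/-- Regularized variance `σ̂_t²(a) = k(a,a) − k_t(a)ᵀ (K_t + σ²I)⁻¹ k_t(a)`. -/
def rvarFn (σ : ℝ) (φ : X → H) {t : ℕ} (xs : Fin t → X) (a : X) : ℝ :=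
  ker φ a a - kvec φ xs a ⬝ᵥ ((gram φ xs + σ ^ 2 • 1)⁻¹ *ᵥ kvec φ xs a)

/-- `σ̂_t(a) = √(σ̂_t²(a))`. -/
def rsigmaFn (σ : ℝ) (φ : X → H) {t : ℕ} (xs : Fin t → X) (a : X) : ℝ :=
  Real.sqrt (rvarFn σ φ xs a)

/-- The first `t` points of the sequence `x` (0-indexed: indices `< t`). -/
def prevPts {T : ℕ} (x : Fin T → X) (t : Fin T) : Fin t.val → X :=
  fun j => x ⟨j.val, j.isLt.trans t.isLt⟩

def ridgeWeights (σ : ℝ) (φ : X → H) {t : ℕ} (xs : Fin t → X) (a : X) : Fin t → ℝ :=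
  (gram φ xs + σ ^ 2 • 1)⁻¹ *ᵥ kvec φ xs a

section Regression

variable (σ : ℝ) (φ : X → H) {n : ℕ} (xs : Fin n → X)

lemma dotProduct_gram_mulVec (c d : Fin n → ℝ) :
    c ⬝ᵥ (gram φ xs *ᵥ d) = ⟪∑ i, c i • φ (xs i), ∑ j, d j • φ (xs j)⟫ := by
  rw [sum_inner]
  simp only [inner_sum, real_inner_smul_left, real_inner_smul_right, dotProduct, mulVec,
    _root_.gram, of_apply, ker, Finset.mul_sum]
  exact Finset.sum_congr rfl fun i _ => Finset.sum_congr rfl fun j _ => by ring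

lemma dotProduct_kvec (a : X) (c : Fin n → ℝ) :
    c ⬝ᵥ kvec φ xs a = ⟪φ a, ∑ i, c i • φ (xs i)⟫ := by
  simp only [inner_sum, kvec, ker, dotProduct, real_inner_smul_right]

lemma gram_posSemidef : (gram φ xs).PosSemidef := by
  refine posSemidef_iff_dotProduct_mulVec.mpr ⟨?_, fun c => ?_⟩
  · ext i j
    simp [_root_.gram, ker, real_inner_comm (φ (xs i))]
  · rw [star_trivial, dotProduct_gram_mulVec]
    exact real_inner_self_nonneg

lemma gram_add_smul_one_posSemidef : (gram φ xs + σ ^ 2 • 1).PosSemidef :=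
  (gram_posSemidef φ xs).add (by
    rw [smul_one_eq_diagonal, posSemidef_diagonal_iff]
    exact fun _ => sq_nonneg σ)

variable {σ} in
lemma gram_add_smul_one_posDef (hσ : σ ≠ 0) : (gram φ xs + σ ^ 2 • 1).PosDef := by
  refine PosDef.posSemidef_add (gram_posSemidef φ xs) ?_
  rw [smul_one_eq_diagonal, posDef_diagonal_iff]
  exact fun _ => by positivity

lemma rmeanFn_eq_ridgeWeights_dotProduct (hfun : X → ℝ) (a : X) :
    rmeanFn σ φ hfun xs a = ridgeWeights σ φ xs a ⬝ᵥ fun i => hfun (xs i) := by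
  have hsymm : ((gram φ xs + σ ^ 2 • 1)⁻¹)ᵀ = (gram φ xs + σ ^ 2 • 1)⁻¹ := by
    simpa [IsHermitian] using (gram_add_smul_one_posSemidef σ φ xs).isHermitian.inv
  rw [rmeanFn, dotProduct_mulVec, ← mulVec_transpose, hsymm, ridgeWeights]

lemma rvarFn_eq_ker_sub (a : X) :
    rvarFn σ φ xs a = ker φ a a - ridgeWeights σ φ xs a ⬝ᵥ kvec φ xs a := by
  rw [rvarFn, dotProduct_comm, ridgeWeights]

lemma rvarFn_le_ker (a : X) : rvarFn σ φ xs a ≤ ker φ a a := by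
  have := (gram_add_smul_one_posSemidef σ φ xs).inv.dotProduct_mulVec_nonneg (kvec φ xs a)
  rw [star_trivial] at this
  rw [rvarFn]
  linarith

variable {σ} in
lemma ridgeWeights_normal_eq (hσ : σ ≠ 0) (a : X) :
    ridgeWeights σ φ xs a ⬝ᵥ (gram φ xs *ᵥ ridgeWeights σ φ xs a) +
        σ ^ 2 * (ridgeWeights σ φ xs a ⬝ᵥ ridgeWeights σ φ xs a) =
      ridgeWeights σ φ xs a ⬝ᵥ kvec φ xs a := by
  have hinv : (gram φ xs + σ ^ 2 • 1) *ᵥ ridgeWeights σ φ xs a = kvec φ xs a := by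
    rw [ridgeWeights, mulVec_mulVec, mul_nonsing_inv _
      ((isUnit_iff_isUnit_det _).mp (gram_add_smul_one_posDef φ xs hσ).isUnit),
      one_mulVec]
  rw [← hinv, add_mulVec, smul_mulVec, one_mulVec, dotProduct_add, dotProduct_smul, smul_eq_mul]

variable {σ} in
lemma rvarFn_eq_norm_sq_add (hσ : σ ≠ 0) (a : X) :
    rvarFn σ φ xs a = ‖φ a - ∑ i, ridgeWeights σ φ xs a i • φ (xs i)‖ ^ 2 +
      σ ^ 2 * (ridgeWeights σ φ xs a ⬝ᵥ ridgeWeights σ φ xs a) := by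
  have hnormal := ridgeWeights_normal_eq φ xs hσ a
  rw [dotProduct_gram_mulVec, real_inner_self_eq_norm_sq, dotProduct_kvec] at hnormal
  rw [rvarFn_eq_ker_sub, norm_sub_sq_real, dotProduct_kvec, ker, real_inner_self_eq_norm_sq]
  linarith

variable {σ} in
lemma rvarFn_nonneg (hσ : σ ≠ 0) (a : X) : 0 ≤ rvarFn σ φ xs a := by
  rw [rvarFn_eq_norm_sq_add φ xs hσ]
  have : 0 ≤ ridgeWeights σ φ xs a ⬝ᵥ ridgeWeights σ φ xs a := by
    simpa using dotProduct_star_self_nonneg (ridgeWeights σ φ xs a)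
  positivity

end Regression

section Perturbation

variable [DecidableEq X] {σ : ℝ} {φ : X → H} {ψ : X → H'}

lemma inner_sum_smul_sum_smul_of_injective
    (hker : ∀ a b : X, (⟪ψ a, ψ b⟫ : ℝ) = ⟪φ a, φ b⟫ + σ ^ 2 * (if a = b then 1 else 0))
    {n : ℕ} {xs : Fin n → X} (hxs : Function.Injective xs) (c d : Fin n → ℝ) :
    ⟪∑ i, c i • ψ (xs i), ∑ j, d j • ψ (xs j)⟫ = c ⬝ᵥ (gram φ xs *ᵥ d) + σ ^ 2 * (c ⬝ᵥ d) := by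
  rw [sum_inner]
  simp only [inner_sum, real_inner_smul_left, real_inner_smul_right, hker, hxs.eq_iff, mul_add,
    Finset.sum_add_distrib, mul_ite, mul_one, mul_zero, Finset.sum_ite_eq, Finset.mem_univ, if_true,
    dotProduct, mulVec, _root_.gram, of_apply, ker, Finset.mul_sum]
  congr 1 <;> refine Finset.sum_congr rfl fun i _ => ?_
  · exact Finset.sum_congr rfl fun j _ => by ring
  · ring

lemma norm_sub_sum_smul_ridgeWeights_sq
    (hker : ∀ a b : X, (⟪ψ a, ψ b⟫ : ℝ) = ⟪φ a, φ b⟫ + σ ^ 2 * (if a = b then 1 else 0))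
    (hσ : σ ≠ 0) {n : ℕ} {xs : Fin n → X} (hxs : Function.Injective xs) {a : X}
    (ha : ∀ i, xs i ≠ a) :
    ‖ψ a - ∑ i, ridgeWeights σ φ xs a i • ψ (xs i)‖ ^ 2 = rvarFn σ φ xs a + σ ^ 2 := by
  set c := ridgeWeights σ φ xs a
  have hself : ⟪ψ a, ψ a⟫ = ker φ a a + σ ^ 2 := by rw [hker, if_pos rfl, mul_one, ker]
  have hcross : ⟪ψ a, ∑ i, c i • ψ (xs i)⟫ = c ⬝ᵥ kvec φ xs a := by
    simp only [inner_sum, real_inner_smul_right, hker, if_neg (ha _).symm, mul_zero, add_zero,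
      dotProduct_kvec]
  rw [norm_sub_sq_real, ← real_inner_self_eq_norm_sq, ← real_inner_self_eq_norm_sq, hself, hcross,
    inner_sum_smul_sum_smul_of_injective hker hxs, ridgeWeights_normal_eq φ xs hσ,
    rvarFn_eq_ker_sub]
  ring

lemma abs_sub_rmeanFn_le
    (hker : ∀ a b : X, (⟪ψ a, ψ b⟫ : ℝ) = ⟪φ a, φ b⟫ + σ ^ 2 * (if a = b then 1 else 0))
    (hσ : 0 < σ) {wh : H'} {hfun : X → ℝ} (hh : ∀ a, hfun a = ⟪wh, ψ a⟫)
    {n : ℕ} {xs : Fin n → X} (hxs : Function.Injective xs) {a : X} (ha : ∀ i, xs i ≠ a) :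
    |hfun a - rmeanFn σ φ hfun xs a| ≤ ‖wh‖ * (rsigmaFn σ φ xs a + σ) := by
  set c := ridgeWeights σ φ xs a
  have hresidual : hfun a - rmeanFn σ φ hfun xs a = ⟪wh, ψ a - ∑ i, c i • ψ (xs i)⟫ := by
    simp only [rmeanFn_eq_ridgeWeights_dotProduct, hh, inner_sub_right, inner_sum,
      real_inner_smul_right, dotProduct, c]
  have hsqrt : √(rvarFn σ φ xs a + σ ^ 2) ≤ rsigmaFn σ φ xs a + σ := by
    have hvar := Real.sq_sqrt (rvarFn_nonneg φ xs hσ.ne' a)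
    have hsd := Real.sqrt_nonneg (rvarFn σ φ xs a)
    rw [rsigmaFn, Real.sqrt_le_iff]
    constructor <;> nlinarith
  calc |hfun a - rmeanFn σ φ hfun xs a| ≤ ‖wh‖ * ‖ψ a - ∑ i, c i • ψ (xs i)‖ := by
        rw [hresidual]; exact abs_real_inner_le_norm _ _
    _ = ‖wh‖ * √(rvarFn σ φ xs a + σ ^ 2) := by
        rw [← norm_sub_sum_smul_ridgeWeights_sq hker hσ.ne' hxs ha, Real.sqrt_sq (norm_nonneg _)]
    _ ≤ ‖wh‖ * (rsigmaFn σ φ xs a + σ) := by gcongr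

lemma sub_le_of_rmeanFn_add_le
    (hker : ∀ a b : X, (⟪ψ a, ψ b⟫ : ℝ) = ⟪φ a, φ b⟫ + σ ^ 2 * (if a = b then 1 else 0))
    (hσ : 0 < σ) {wh : H'} {hfun : X → ℝ} (hh : ∀ a, hfun a = ⟪wh, ψ a⟫)
    {n : ℕ} {xs : Fin n → X} (hxs : Function.Injective xs) {a b : X}
    (ha : ∀ i, xs i ≠ a) (hb : ∀ i, xs i ≠ b)
    (hacq : rmeanFn σ φ hfun xs a + ‖wh‖ * rsigmaFn σ φ xs a ≤
      rmeanFn σ φ hfun xs b + ‖wh‖ * rsigmaFn σ φ xs b) :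
    hfun a - hfun b ≤ 2 * ‖wh‖ * (rsigmaFn σ φ xs b + σ) := by
  have hca := (abs_le.mp (abs_sub_rmeanFn_le hker hσ hh hxs ha)).2
  have hcb := (abs_le.mp (abs_sub_rmeanFn_le hker hσ hh hxs hb)).1
  linarith

end Perturbation

section Determinant

variable (φ : X → H) {σ : ℝ}

lemma submatrix_gram_add_smul_one_finSumFinEquiv (σ : ℝ) {n : ℕ} (xs : Fin (n + 1) → X) :
    (gram φ xs + σ ^ 2 • 1).submatrix finSumFinEquiv finSumFinEquiv =
      fromBlocks (gram φ (xs ∘ Fin.castSucc) + σ ^ 2 • 1)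
        (replicateCol (Fin 1) (kvec φ (xs ∘ Fin.castSucc) (xs (Fin.last n))))
        (replicateRow (Fin 1) (kvec φ (xs ∘ Fin.castSucc) (xs (Fin.last n))))
        (of fun _ _ => ker φ (xs (Fin.last n)) (xs (Fin.last n)) + σ ^ 2) := by
  have hlast (i : Fin 1) : Fin.natAdd n i = Fin.last n := Fin.ext (by simp)
  have hcast (i : Fin n) : Fin.castAdd 1 i = Fin.castSucc i := rfl
  ext (i | i) (j | j) <;>
    simp [_root_.gram, kvec, ker, one_apply, hlast, hcast, Fin.castSucc_ne_last,
      (Fin.castSucc_ne_last _).symm, real_inner_comm]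

lemma det_gram_add_smul_one_succ (hσ : σ ≠ 0) {n : ℕ} (xs : Fin (n + 1) → X) :
    (gram φ xs + σ ^ 2 • 1).det =
      (gram φ (xs ∘ Fin.castSucc) + σ ^ 2 • 1).det *
        (σ ^ 2 + rvarFn σ φ (xs ∘ Fin.castSucc) (xs (Fin.last n))) := by
  have := (gram_add_smul_one_posDef φ (xs ∘ Fin.castSucc) hσ).isUnit.invertible
  rw [← det_submatrix_equiv_self finSumFinEquiv, submatrix_gram_add_smul_one_finSumFinEquiv,
    det_fromBlocks₁₁, invOf_eq_nonsing_inv, det_fin_one]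
  rw [Matrix.mul_assoc, ← replicateCol_mulVec, replicateRow_mul_replicateCol]
  change _ * (_ + σ ^ 2 - (_ : Fin n → ℝ) ⬝ᵥ _) = _
  rw [rvarFn]
  ring

lemma det_gram_add_smul_one_eq_prod (hσ : σ ≠ 0) :
    ∀ {n : ℕ} (xs : Fin n → X),
      (gram φ xs + σ ^ 2 • 1).det = ∏ t, (σ ^ 2 + rvarFn σ φ (prevPts xs t) (xs t))
  | 0, xs => by simp
  | n + 1, xs => by
    rw [det_gram_add_smul_one_succ φ hσ, det_gram_add_smul_one_eq_prod hσ (xs ∘ Fin.castSucc),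
      Fin.prod_univ_castSucc]
    rfl

lemma log_det_one_add_inv_smul_gram (hσ : σ ≠ 0) {n : ℕ} (xs : Fin n → X) :
    Real.log (1 + (σ ^ 2)⁻¹ • gram φ xs).det =
      ∑ t, Real.log (1 + (σ ^ 2)⁻¹ * rvarFn σ φ (prevPts xs t) (xs t)) := by
  have hσ2 : σ ^ 2 ≠ 0 := pow_ne_zero 2 hσ
  have hscale : 1 + (σ ^ 2)⁻¹ • gram φ xs = (σ ^ 2)⁻¹ • (gram φ xs + σ ^ 2 • 1) := by
    rw [smul_add, smul_smul, inv_mul_cancel₀ hσ2, one_smul, add_comm]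
  rw [hscale, det_smul, det_gram_add_smul_one_eq_prod φ hσ, Fintype.card_fin, ← Fin.prod_const,
    ← Finset.prod_mul_distrib, Real.log_prod]
  · congr! 2 with t
    field_simp
  · intro t _
    have := rvarFn_nonneg φ (prevPts xs t) hσ (xs t)
    positivity

end Determinant

lemma mul_log_one_add_le_mul_log_one_add {B c s : ℝ} (hB : 0 < B) (hc : 0 ≤ c) (hs : 0 ≤ s)
    (hsB : s ≤ B) : s * Real.log (1 + c * B) ≤ B * Real.log (1 + c * s) := by
  have hbernoulli : (1 + c * B) ^ (s / B) ≤ 1 + c * s :=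
    (rpow_one_add_le_one_add_mul_self (by nlinarith) (div_nonneg hs hB.le)
      ((div_le_one hB).mpr hsB)).trans_eq (by field_simp)
  have hlog := Real.log_le_log (by positivity) hbernoulli
  rw [Real.log_rpow (by positivity), div_mul_eq_mul_div, div_le_iff₀ hB] at hlog
  linarith

lemma prevPts_injective {T : ℕ} {x : Fin T → X} (hx : Function.Injective x) (t : Fin T) :
    Function.Injective (prevPts x t) :=
  fun _ _ hij => Fin.ext (Fin.mk.inj_iff.mp (hx hij))

lemma prevPts_ne {T : ℕ} {x : Fin T → X} (hx : Function.Injective x) (t : Fin T)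
    (i : Fin t) : prevPts x t i ≠ x t :=
  fun h => i.isLt.ne (Fin.mk.inj_iff.mp (hx h))

section InformationGain

variable {σ : ℝ} (φ : X → H)

lemma two_mul_sum_rsigmaFn_le (hσ : σ ≠ 0) {B : ℝ} (hB : 0 < B) {n : ℕ} (xs : Fin n → X)
    (hkerB : ∀ t, ker φ (xs t) (xs t) ≤ B) {γ : ℝ}
    (hγ : (1/2) * Real.log ((1 + (σ^2)⁻¹ • gram φ xs).det) ≤ γ) :
    2 * ∑ t, rsigmaFn σ φ (prevPts xs t) (xs t) ≤
      √(n * (8 * B / Real.log (1 + B * (σ^2)⁻¹)) * γ) := by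
  set r := fun t => rvarFn σ φ (prevPts xs t) (xs t)
  set L := Real.log (1 + B * (σ^2)⁻¹)
  have hr : ∀ t, 0 ≤ r t := fun t => rvarFn_nonneg φ _ hσ _
  have hL : 0 < L := Real.log_pos (lt_add_of_pos_right 1 (mul_pos hB (by positivity)))
  have hsum : (∑ t, r t) * L ≤ 2 * B * γ := by
    have hterm (t : Fin n) : r t * L ≤ B * Real.log (1 + (σ ^ 2)⁻¹ * r t) := by
      have := mul_log_one_add_le_mul_log_one_add hB (inv_nonneg.mpr (sq_nonneg σ)) (hr t)
        ((rvarFn_le_ker σ φ _ _).trans (hkerB t))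
      rwa [mul_comm (σ ^ 2)⁻¹ B] at this
    calc (∑ t, r t) * L ≤ ∑ t, B * Real.log (1 + (σ ^ 2)⁻¹ * r t) := by
          rw [Finset.sum_mul]; exact Finset.sum_le_sum fun t _ => hterm t
      _ = B * Real.log (1 + (σ ^ 2)⁻¹ • gram φ xs).det := by
          rw [← Finset.mul_sum, log_det_one_add_inv_smul_gram φ hσ]
      _ ≤ 2 * B * γ := by nlinarith
  have hcs : (∑ t, √(r t)) ^ 2 ≤ n * ∑ t, r t := by
    simpa [Real.sq_sqrt (hr _)] using
      sq_sum_le_card_mul_sum_sq (s := Finset.univ) (f := fun t => √(r t))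
  apply Real.le_sqrt_of_sq_le
  calc (2 * ∑ t, √(r t)) ^ 2 ≤ 4 * (n * ∑ t, r t) := by nlinarith
    _ ≤ 4 * (n * (2 * B * γ / L)) := by gcongr; exact (le_div_iff₀ hL).mpr hsum
    _ = n * (8 * B / L) * γ := by ring

end InformationGain

lemma sub_sup'_le_of_sum_sub_le {ι : Type*} [Fintype ι] (hι : (Finset.univ : Finset ι).Nonempty)
    (u : ι → ℝ) {a R : ℝ} (h : ∑ i, (a - u i) ≤ Fintype.card ι * R) :
    a - Finset.univ.sup' hι u ≤ R := by
  have hle : Fintype.card ι • (a - Finset.univ.sup' hι u) ≤ ∑ i, (a - u i) :=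
    Finset.card_nsmul_le_sum _ _ _ fun i _ =>
      sub_le_sub_left (Finset.le_sup' u (Finset.mem_univ i)) a
  rw [nsmul_eq_mul] at hle
  exact le_of_mul_le_mul_left (hle.trans h) (Nat.cast_pos.mpr hι.card_pos)

lemma sqrt_mul_eq_mul_sqrt_div {T y : ℝ} (hT : 0 < T) : √(T * y) = T * √(y / T) := by
  rw [show T * y = T ^ 2 * (y / T) by field_simp, Real.sqrt_mul (sq_nonneg _),
    Real.sqrt_sq hT.le]

theorem statement_2_general [DecidableEq X]
    (φ : X → H) (ψ : X → H')
    (σ : ℝ) (hσ : 0 < σ) (B : ℝ) (hB : 0 < B)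
    (hker : ∀ a b : X, (⟪ψ a, ψ b⟫ : ℝ) = ⟪φ a, φ b⟫ + σ ^ 2 * (if a = b then 1 else 0))
    (hkB : ∀ a : X, (⟪ψ a, ψ a⟫ : ℝ) ≤ B)
    (wh : H') (hfun : X → ℝ) (hh : ∀ a, hfun a = ⟪wh, ψ a⟫)
    (g : X → ℝ) (G : ℝ) (hg : ∀ a : X, |g a| ≤ G * σ)
    (f : X → ℝ) (hfdef : ∀ a, f a = hfun a - g a)
    (T : ℕ) (hT : 0 < T)
    (xstar : X)
    (x : Fin T → X)
    (hinj : Function.Injective x) (hne : ∀ t : Fin T, x t ≠ xstar)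
    (hacq : ∀ t : Fin T, ∀ a : X,
      rmeanFn σ φ hfun (prevPts x t) a + ‖wh‖ * rsigmaFn σ φ (prevPts x t) a ≤
        rmeanFn σ φ hfun (prevPts x t) (x t) + ‖wh‖ * rsigmaFn σ φ (prevPts x t) (x t))
    (γ : ℝ)
    (hγ : (1/2) * Real.log ((1 + (σ^2)⁻¹ • gram φ x).det) ≤ γ) :
    (∑ t : Fin T, (f xstar - f (x t))) ≤
        ‖wh‖ * Real.sqrt ((T : ℝ) * (8 * B / Real.log (1 + B * (σ^2)⁻¹)) * γ) +
          2 * (T : ℝ) * (‖wh‖ + G) * σ ∧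
    f xstar - (Finset.univ.sup' (Finset.univ_nonempty_iff.mpr (Fin.pos_iff_nonempty.mp hT))
        fun t => f (x t)) ≤
      ‖wh‖ * Real.sqrt ((8 * B / Real.log (1 + B * (σ^2)⁻¹)) * γ / (T : ℝ)) +
        2 * (‖wh‖ + G) * σ := by
  set C₃ := 8 * B / Real.log (1 + B * (σ^2)⁻¹)
  have hinstant (t : Fin T) : f xstar - f (x t) ≤
      ‖wh‖ * (2 * rsigmaFn σ φ (prevPts x t) (x t)) + 2 * (‖wh‖ + G) * σ := by
    have hucb := sub_le_of_rmeanFn_add_le hker hσ hh (prevPts_injective hinj t)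
      (fun _ => hne _) (prevPts_ne hinj t) (hacq t xstar)
    rw [hfdef, hfdef]
    linarith [abs_le.mp (hg xstar), abs_le.mp (hg (x t))]
  have hkerB (a : X) : ker φ a a ≤ B :=
    (le_add_of_nonneg_right (sq_nonneg σ)).trans
      (by simpa only [hker, ker, ↓reduceIte, mul_one] using hkB a)
  have hcumulative :
      ∑ t, (f xstar - f (x t)) ≤ ‖wh‖ * √(T * C₃ * γ) + 2 * T * (‖wh‖ + G) * σ := by
    calc ∑ t, (f xstar - f (x t))
        ≤ ∑ t, (‖wh‖ * (2 * rsigmaFn σ φ (prevPts x t) (x t)) + 2 * (‖wh‖ + G) * σ) :=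
          Finset.sum_le_sum fun t _ => hinstant t
      _ = ‖wh‖ * (2 * ∑ t, rsigmaFn σ φ (prevPts x t) (x t)) + 2 * T * (‖wh‖ + G) * σ := by
          rw [Finset.sum_add_distrib, ← Finset.mul_sum, ← Finset.mul_sum, Finset.sum_const,
            Finset.card_univ, Fintype.card_fin, nsmul_eq_mul]
          ring
      _ ≤ ‖wh‖ * √(T * C₃ * γ) + 2 * T * (‖wh‖ + G) * σ := by
          gcongr
          exact two_mul_sum_rsigmaFn_le φ hσ.ne' hB x (fun t => hkerB (x t)) hγ
  refine ⟨hcumulative, sub_sup'_le_of_sum_sub_le _ _ (hcumulative.trans_eq ?_)⟩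
  rw [Fintype.card_fin, mul_assoc (T : ℝ), sqrt_mul_eq_mul_sqrt_div (Nat.cast_pos.mpr hT)]
  ring

/-- Theorem 3 (perturbation-setting sequential regret bounds). -/
theorem statement_2 [Nonempty X] [DecidableEq X]
    (φ : X → H) (ψ : X → H')
    (σ : ℝ) (hσ : 0 < σ) (B : ℝ) (hB : 0 < B)
    (hker : ∀ a b : X, (⟪ψ a, ψ b⟫ : ℝ) = ⟪φ a, φ b⟫ + σ ^ 2 * (if a = b then 1 else 0))
    (hkB : ∀ a : X, (⟪ψ a, ψ a⟫ : ℝ) ≤ B)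
    (wh : H') (hfun : X → ℝ) (hh : ∀ a, hfun a = ⟪wh, ψ a⟫)
    (g : X → ℝ) (G : ℝ) (hG : 0 ≤ G) (hg : ∀ a : X, |g a| ≤ G * σ)
    (f : X → ℝ) (hfdef : ∀ a, f a = hfun a - g a)
    (T : ℕ) (hT : 0 < T)
    (xstar : X) (hstar : ∀ a : X, f a ≤ f xstar)
    (x : Fin T → X)
    (hinj : Function.Injective x) (hne : ∀ t : Fin T, x t ≠ xstar)
    (hacq : ∀ t : Fin T, ∀ a : X,
      rmeanFn σ φ hfun (prevPts x t) a + ‖wh‖ * rsigmaFn σ φ (prevPts x t) a ≤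
        rmeanFn σ φ hfun (prevPts x t) (x t) + ‖wh‖ * rsigmaFn σ φ (prevPts x t) (x t))
    (γ : ℝ)
    (hγ : (1/2) * Real.log ((1 + (σ^2)⁻¹ • gram φ x).det) ≤ γ) :
    (∑ t : Fin T, (f xstar - f (x t))) ≤
        ‖wh‖ * Real.sqrt ((T : ℝ) * (8 * B / Real.log (1 + B * (σ^2)⁻¹)) * γ) +
          2 * (T : ℝ) * (‖wh‖ + G) * σ ∧
    f xstar - (Finset.univ.sup' (Finset.univ_nonempty_iff.mpr (Fin.pos_iff_nonempty.mp hT))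
        fun t => f (x t)) ≤
      ‖wh‖ * Real.sqrt ((8 * B / Real.log (1 + B * (σ^2)⁻¹)) * γ / (T : ℝ)) +
        2 * (‖wh‖ + G) * σ :=
  statement_2_general φ ψ σ hσ B hB hker hkB wh hfun hh g G hg f hfdef T hT xstar x hinj hne hacq γ
    hγ
end
end

section
/- Let f(x) = ⟨w, φ(x)⟩ for some w ∈ H, and let x₁, …, x_t ∈ X have invertible Gram matrix K_t. Then for any points x̂₁, …, x̂_L ∈ X, (Σ_{i=1}^L m_t(x̂_i) − Σ_{i=1}^L f(x̂_i))² ≤ ‖w‖² · (𝟙ᵀ A 𝟙), where A is the L×L matrix with entries A_{ij} = k(x̂_i, x̂_j) − k_t(x̂_i)ᵀ K_t⁻¹ k_t(x̂_j) and 𝟙 is the all-ones vector in ℝ^L. -/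
open scoped RealInnerProductSpace
open Matrix

noncomputable section

variable {X : Type*} {H : Type*} [NormedAddCommGroup H] [InnerProductSpace ℝ H]

/-- The mean prediction `m_t(a) = k_t(a)ᵀ K_t⁻¹ (f(x₁),…,f(x_t))ᵀ`. -/
def meanFn (φ : X → H) (f : X → ℝ) {t : ℕ} (xs : Fin t → X) (a : X) : ℝ :=
  kvec φ xs a ⬝ᵥ ((gram φ xs)⁻¹ *ᵥ (fun i => f (xs i)))

/-- The variance `σ_t²(a) = k(a,a) − k_t(a)ᵀ K_t⁻¹ k_t(a)`. -/
def varFn (φ : X → H) {t : ℕ} (xs : Fin t → X) (a : X) : ℝ :=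
  ker φ a a - kvec φ xs a ⬝ᵥ ((gram φ xs)⁻¹ *ᵥ kvec φ xs a)

/-- `σ_t(a) = √(σ_t²(a))`. -/
def sigmaFn (φ : X → H) {t : ℕ} (xs : Fin t → X) (a : X) : ℝ := Real.sqrt (varFn φ xs a)

/-- The noise-free batch covariance matrix `cov_t(X̂,X̂)` with entries
`A_{ij} = k(x̂_i,x̂_j) − k_t(x̂_i)ᵀ K_t⁻¹ k_t(x̂_j)`. -/
def covMat (φ : X → H) {t L : ℕ} (xs : Fin t → X) (XX : Fin L → X) :
    Matrix (Fin L) (Fin L) ℝ :=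
  Matrix.of fun i j =>
    ker φ (XX i) (XX j) - kvec φ xs (XX i) ⬝ᵥ ((gram φ xs)⁻¹ *ᵥ kvec φ xs (XX j))

/-! Write `P` for the orthogonal projection onto `span {φ(x₁),…,φ(x_t)}`. The interpolation
coefficients `c(a) = K_t⁻¹ k_t(a)` are the coordinates of `P φ(a)`, so the residual
`ψ(a) = P φ(a) − φ(a)` satisfies `m_t(a) − f(a) = ⟪w, ψ(a)⟫` and
`⟪ψ(a), ψ(b)⟫ = k(a,b) − k_t(a)ᵀ K_t⁻¹ k_t(b)`. Summing over the `x̂ᵢ` and applying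
Cauchy–Schwarz to `w` and `∑ᵢ ψ(x̂ᵢ)` gives the bound, since `‖∑ᵢ ψ(x̂ᵢ)‖² = 𝟙ᵀ A 𝟙`. -/

section Interpolation

variable (φ : X → H) {t : ℕ} (xs : Fin t → X)

lemma gram_transpose : (gram φ xs)ᵀ = gram φ xs := by
  ext i j
  exact real_inner_comm _ _

lemma inv_gram_transpose : (gram φ xs)⁻¹ᵀ = (gram φ xs)⁻¹ := by
  rw [transpose_nonsing_inv, gram_transpose]

def interpCoeff (a : X) : Fin t → ℝ := (gram φ xs)⁻¹ *ᵥ kvec φ xs a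

def interpResidual (a : X) : H := ∑ j, interpCoeff φ xs a j • φ (xs j) - φ a

lemma kvec_dotProduct_inv_gram_mulVec (a : X) (v : Fin t → ℝ) :
    kvec φ xs a ⬝ᵥ ((gram φ xs)⁻¹ *ᵥ v) = interpCoeff φ xs a ⬝ᵥ v := by
  rw [dotProduct_mulVec, ← mulVec_transpose, inv_gram_transpose, interpCoeff]

lemma gram_mulVec_interpCoeff (hinv : IsUnit (gram φ xs).det) (a : X) :
    gram φ xs *ᵥ interpCoeff φ xs a = kvec φ xs a := by
  rw [interpCoeff, mulVec_mulVec, mul_nonsing_inv _ hinv, one_mulVec]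

lemma inner_sum_smul_left {ι : Type*} [Fintype ι] (c : ι → ℝ) (e : ι → H) (h : H) :
    ⟪∑ j, c j • e j, h⟫ = c ⬝ᵥ fun j => ⟪e j, h⟫ := by
  simp only [sum_inner, real_inner_smul_left, dotProduct]

lemma inner_interpResidual (w : H) (f : X → ℝ) (hf : ∀ a, f a = ⟪w, φ a⟫) (a : X) :
    ⟪w, interpResidual φ xs a⟫ = meanFn φ f xs a - f a := by
  rw [interpResidual, inner_sub_right, real_inner_comm, inner_sum_smul_left, meanFn,
    kvec_dotProduct_inv_gram_mulVec]
  simp_rw [hf, real_inner_comm w]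

lemma inner_sum_smul_feature (c : Fin t → ℝ) (a : X) :
    ⟪∑ j, c j • φ (xs j), φ a⟫ = c ⬝ᵥ kvec φ xs a := by
  simp_rw [inner_sum_smul_left, real_inner_comm (φ a)]
  rfl

lemma gram_mulVec_eq_inner_sum (c : Fin t → ℝ) :
    gram φ xs *ᵥ c = fun i => ⟪φ (xs i), ∑ j, c j • φ (xs j)⟫ := by
  ext i
  simp only [mulVec, dotProduct, _root_.gram, ker, of_apply, inner_sum, real_inner_smul_right,
    mul_comm]

lemma inner_interpResidual_interpResidual (hinv : IsUnit (gram φ xs).det) (a b : X) :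
    ⟪interpResidual φ xs a, interpResidual φ xs b⟫ =
      ker φ a b - kvec φ xs a ⬝ᵥ ((gram φ xs)⁻¹ *ᵥ kvec φ xs b) := by
  set Pa := ∑ j, interpCoeff φ xs a j • φ (xs j)
  set Pb := ∑ j, interpCoeff φ xs b j • φ (xs j)
  have h_proj_proj : ⟪Pa, Pb⟫ = interpCoeff φ xs a ⬝ᵥ kvec φ xs b := by
    rw [inner_sum_smul_left, ← gram_mulVec_interpCoeff φ xs hinv b, gram_mulVec_eq_inner_sum]
  have h_proj_feature : ⟪Pa, φ b⟫ = interpCoeff φ xs a ⬝ᵥ kvec φ xs b :=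
    inner_sum_smul_feature φ xs _ b
  have h_feature_proj : ⟪φ a, Pb⟫ = interpCoeff φ xs a ⬝ᵥ kvec φ xs b := by
    rw [real_inner_comm, inner_sum_smul_feature, dotProduct_comm, interpCoeff,
      kvec_dotProduct_inv_gram_mulVec]
  rw [interpResidual, interpResidual, inner_sub_left, inner_sub_right, inner_sub_right,
    h_proj_proj, h_proj_feature, h_feature_proj, kvec_dotProduct_inv_gram_mulVec, ker]
  ring

end Interpolation

/-- Lemma 3: `(Σᵢ m_t(x̂ᵢ) − Σᵢ f(x̂ᵢ))² ≤ ‖w‖²·(𝟙ᵀ A 𝟙)`. -/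
theorem statement_10
    (φ : X → H) (w : H) (f : X → ℝ) (hf : ∀ a, f a = ⟪w, φ a⟫)
    (t L : ℕ) (xs : Fin t → X) (hinv : IsUnit (gram φ xs).det)
    (xhat : Fin L → X) :
    (∑ i, meanFn φ f xs (xhat i) - ∑ i, f (xhat i)) ^ 2 ≤
      ‖w‖ ^ 2 * ∑ i, ∑ j, covMat φ xs xhat i j := by
  set ψ : H := ∑ i, interpResidual φ xs (xhat i)
  have h_err : ∑ i, meanFn φ f xs (xhat i) - ∑ i, f (xhat i) = ⟪w, ψ⟫ := by
    simp only [ψ, inner_sum, inner_interpResidual φ xs w f hf, Finset.sum_sub_distrib]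
  have h_norm : ⟪ψ, ψ⟫ = ∑ i, ∑ j, covMat φ xs xhat i j := by
    rw [sum_inner]
    simp only [ψ, inner_sum, inner_interpResidual_interpResidual φ xs hinv]
    rfl
  calc (∑ i, meanFn φ f xs (xhat i) - ∑ i, f (xhat i)) ^ 2 = ⟪w, ψ⟫ * ⟪w, ψ⟫ := by
        rw [h_err, sq]
    _ ≤ ⟪w, w⟫ * ⟪ψ, ψ⟫ := real_inner_mul_inner_self_le w ψ
    _ = ‖w‖ ^ 2 * ∑ i, ∑ j, covMat φ xs xhat i j := by
        rw [h_norm, real_inner_self_eq_norm_sq]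
end
end

section
/- Let σ > 0, let x₁, …, x_t ∈ X be pairwise distinct, let h(x) = ⟨w_h, ψ(x)⟩ for some w_h ∈ H′, let g : X → ℝ satisfy |g(x)| ≤ G·σ for all x with G ≥ 0, and set f = h − g. Then for any points x̂₁, …, x̂_L ∈ X with x̂_i ∉ {x₁,…,x_t} for all i, |Σ_{i=1}^L m̂_t(x̂_i) − Σ_{i=1}^L f(x̂_i)| ≤ ‖w_h‖·√(𝟙ᵀ A 𝟙 + L²·σ²) + L·G·σ, where A is the L×L matrix with entries A_{ij} = k(x̂_i, x̂_j) − k_t(x̂_i)ᵀ (K_t + σ²I)⁻¹ k_t(x̂_j) and 𝟙 is the all-ones vector in ℝ^L. -/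
open scoped RealInnerProductSpace
open Matrix

noncomputable section

variable {X : Type*} {H : Type*} {H' : Type*}
  [NormedAddCommGroup H] [InnerProductSpace ℝ H]
  [NormedAddCommGroup H'] [InnerProductSpace ℝ H']

/-- The regularized batch covariance matrix `ĉov(X̂,X̂)` after selecting the points `xs`,
with entries `A_{ij} = k(x̂_i,x̂_j) − k_t(x̂_i)ᵀ (K_t + σ²I)⁻¹ k_t(x̂_j)`. -/
def rcovMat (σ : ℝ) (φ : X → H) {t L : ℕ} (xs : Fin t → X) (XX : Fin L → X) :
    Matrix (Fin L) (Fin L) ℝ :=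
  Matrix.of fun i j =>
    ker φ (XX i) (XX j) -
      kvec φ xs (XX i) ⬝ᵥ ((gram φ xs + σ ^ 2 • 1)⁻¹ *ᵥ kvec φ xs (XX j))

/-!
Because the training points are distinct, `K_t + σ²I` is the Gram matrix of the features
`ψ(x_j)`, and because the `x̂_i` are new, `k_t(x̂)` is the vector of the `ψ`-inner products
`⟪ψ(x̂), ψ(x_j)⟫`. Hence `m̂_t(x̂) - h(x̂) = ⟪w_h, e(x̂)⟫` for the residual
`e(x̂) = ∑ⱼ αⱼ ψ(x_j) - ψ(x̂)` of the kernel regression, `α = (K_t + σ²I)⁻¹ k_t(x̂)`.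
The residual is orthogonal to the fitted part, so `⟪e(x̂_i), e(x̂_j)⟫ = A_ij + σ² δ(x̂_i, x̂_j)`
and `‖∑ᵢ e(x̂_i)‖² ≤ 𝟙ᵀA𝟙 + L²σ²`. Cauchy–Schwarz and `|g| ≤ Gσ` finish the bound.
-/

section GramResidual

variable {E ι : Type*} [NormedAddCommGroup E] [InnerProductSpace ℝ E]

def kernelVec (v : ι → E) (a : E) : ι → ℝ := fun j => ⟪a, v j⟫

lemma isSymm_gram (v : ι → E) : (Matrix.gram ℝ v).IsSymm :=
  Matrix.ext fun _ _ => real_inner_comm _ _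

variable [Fintype ι]

lemma inner_sum_smul_left_s17 (v : ι → E) (c : ι → ℝ) (a : E) :
    ⟪∑ j, c j • v j, a⟫ = kernelVec v a ⬝ᵥ c := by
  simp only [sum_inner, real_inner_smul_left, dotProduct, kernelVec]
  exact Finset.sum_congr rfl fun j _ => by rw [real_inner_comm, mul_comm]

lemma kernelVec_sum_smul (v : ι → E) (c : ι → ℝ) :
    kernelVec v (∑ j, c j • v j) = Matrix.gram ℝ v *ᵥ c := by
  ext i
  exact inner_sum_smul_left_s17 v c (v i)

variable [DecidableEq ι]

def gramCoeffs (v : ι → E) (a : E) : ι → ℝ := (Matrix.gram ℝ v)⁻¹ *ᵥ kernelVec v a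

def gramResidual (v : ι → E) (a : E) : E := ∑ j, gramCoeffs v a j • v j - a

variable (v : ι → E)

lemma kernelVec_dotProduct_gramCoeffs_comm (a b : E) :
    kernelVec v a ⬝ᵥ gramCoeffs v b = kernelVec v b ⬝ᵥ gramCoeffs v a := by
  rw [gramCoeffs, gramCoeffs, dotProduct_mulVec, ← mulVec_transpose, (isSymm_gram v).inv,
    dotProduct_comm]

lemma inner_gramResidual_right (w a : E) :
    ⟪w, gramResidual v a⟫ = kernelVec v w ⬝ᵥ gramCoeffs v a - ⟪w, a⟫ := by
  rw [gramResidual, inner_sub_right, real_inner_comm, inner_sum_smul_left_s17]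

lemma inner_sum_gramCoeffs_smul_gramResidual (a b : E) :
    ⟪∑ j, gramCoeffs v a j • v j, gramResidual v b⟫ = 0 := by
  rw [inner_gramResidual_right, kernelVec_sum_smul, inner_sum_smul_left_s17,
    kernelVec_dotProduct_gramCoeffs_comm, sub_eq_zero]
  -- for a singular Gram matrix, `⁻¹` is `0` and so are the coefficients
  rcases nonsing_inv_cancel_or_zero (Matrix.gram ℝ v) with ⟨-, hinv⟩ | hzero
  · rw [gramCoeffs, mulVec_mulVec, hinv, one_mulVec]
  · simp [gramCoeffs, hzero]

lemma inner_gramResidual (a b : E) :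
    ⟪gramResidual v a, gramResidual v b⟫ = ⟪a, b⟫ - kernelVec v a ⬝ᵥ gramCoeffs v b := by
  rw [gramResidual, inner_sub_left, inner_sum_gramCoeffs_smul_gramResidual,
    inner_gramResidual_right]
  ring

end GramResidual

section Perturbation

variable [DecidableEq X] {φ : X → H} {ψ : X → H'} {σ : ℝ} {t : ℕ} {xs : Fin t → X}

lemma gram_add_smul_one_eq_gram
    (hker : ∀ a b : X, (⟪ψ a, ψ b⟫ : ℝ) = ⟪φ a, φ b⟫ + σ ^ 2 * (if a = b then 1 else 0))
    (hinj : Function.Injective xs) :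
    _root_.gram φ xs + σ ^ 2 • 1 = Matrix.gram ℝ (ψ ∘ xs) := by
  ext i j
  simp [_root_.gram, ker, hker, Matrix.one_apply, hinj.eq_iff]

lemma kvec_eq_kernelVec
    (hker : ∀ a b : X, (⟪ψ a, ψ b⟫ : ℝ) = ⟪φ a, φ b⟫ + σ ^ 2 * (if a = b then 1 else 0))
    {a : X} (ha : ∀ j, a ≠ xs j) :
    kvec φ xs a = kernelVec (ψ ∘ xs) (ψ a) := by
  ext j
  simp [kvec, ker, kernelVec, hker, ha j]

lemma rmeanFn_sub_eq_inner_gramResidual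
    (hker : ∀ a b : X, (⟪ψ a, ψ b⟫ : ℝ) = ⟪φ a, φ b⟫ + σ ^ 2 * (if a = b then 1 else 0))
    {wh : H'} {hfun : X → ℝ} (hh : ∀ a, hfun a = ⟪wh, ψ a⟫)
    (hinj : Function.Injective xs) {a : X} (ha : ∀ j, a ≠ xs j) :
    rmeanFn σ φ hfun xs a - hfun a = ⟪wh, gramResidual (ψ ∘ xs) (ψ a)⟫ := by
  have hvec : (fun j => hfun (xs j)) = kernelVec (ψ ∘ xs) wh := funext fun j => hh (xs j)
  rw [inner_gramResidual_right, ← hh, ← kernelVec_dotProduct_gramCoeffs_comm, rmeanFn,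
    gram_add_smul_one_eq_gram hker hinj, kvec_eq_kernelVec hker ha, hvec]
  rfl

lemma inner_gramResidual_eq_rcovMat
    (hker : ∀ a b : X, (⟪ψ a, ψ b⟫ : ℝ) = ⟪φ a, φ b⟫ + σ ^ 2 * (if a = b then 1 else 0))
    (hinj : Function.Injective xs) {L : ℕ} {xhat : Fin L → X}
    (hnew : ∀ (i : Fin L) (j : Fin t), xhat i ≠ xs j) (i j : Fin L) :
    ⟪gramResidual (ψ ∘ xs) (ψ (xhat i)), gramResidual (ψ ∘ xs) (ψ (xhat j))⟫ =
      rcovMat σ φ xs xhat i j + σ ^ 2 * (if xhat i = xhat j then 1 else 0) := by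
  rw [inner_gramResidual, rcovMat, of_apply, gram_add_smul_one_eq_gram hker hinj,
    kvec_eq_kernelVec hker (hnew i), kvec_eq_kernelVec hker (hnew j), hker, ker, gramCoeffs]
  ring

lemma norm_sum_gramResidual_sq_le
    (hker : ∀ a b : X, (⟪ψ a, ψ b⟫ : ℝ) = ⟪φ a, φ b⟫ + σ ^ 2 * (if a = b then 1 else 0))
    (hinj : Function.Injective xs) {L : ℕ} {xhat : Fin L → X}
    (hnew : ∀ (i : Fin L) (j : Fin t), xhat i ≠ xs j) :
    ‖∑ i, gramResidual (ψ ∘ xs) (ψ (xhat i))‖ ^ 2 ≤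
      (∑ i, ∑ j, rcovMat σ φ xs xhat i j) + (L : ℝ) ^ 2 * σ ^ 2 := by
  rw [← real_inner_self_eq_norm_sq, sum_inner]
  simp_rw [inner_sum, inner_gramResidual_eq_rcovMat hker hinj hnew, Finset.sum_add_distrib]
  gcongr
  calc ∑ i : Fin L, ∑ j : Fin L, σ ^ 2 * (if xhat i = xhat j then 1 else 0)
      ≤ ∑ _i : Fin L, ∑ _j : Fin L, σ ^ 2 := by
        gcongr with i _ j _
        split_ifs <;> simp [sq_nonneg]
    _ = (L : ℝ) ^ 2 * σ ^ 2 := by simp; ring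

end Perturbation

theorem statement_17_general [DecidableEq X]
    (φ : X → H) (ψ : X → H')
    (σ : ℝ)
    (hker : ∀ a b : X, (⟪ψ a, ψ b⟫ : ℝ) = ⟪φ a, φ b⟫ + σ ^ 2 * (if a = b then 1 else 0))
    (wh : H') (hfun : X → ℝ) (hh : ∀ a, hfun a = ⟪wh, ψ a⟫)
    (g : X → ℝ) (G : ℝ) (hg : ∀ a : X, |g a| ≤ G * σ)
    (f : X → ℝ) (hfdef : ∀ a, f a = hfun a - g a)
    (t L : ℕ) (xs : Fin t → X) (hinj : Function.Injective xs)
    (xhat : Fin L → X) (hnew : ∀ (i : Fin L) (j : Fin t), xhat i ≠ xs j) :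
    |∑ i, rmeanFn σ φ hfun xs (xhat i) - ∑ i, f (xhat i)| ≤
      ‖wh‖ * Real.sqrt ((∑ i, ∑ j, rcovMat σ φ xs xhat i j) + (L : ℝ) ^ 2 * σ ^ 2) +
        (L : ℝ) * G * σ := by
  set e := ∑ i, gramResidual (ψ ∘ xs) (ψ (xhat i))
  have hdev : ∑ i, rmeanFn σ φ hfun xs (xhat i) - ∑ i, f (xhat i) =
      ⟪wh, e⟫ + ∑ i, g (xhat i) := by
    simp only [e, inner_sum, ← rmeanFn_sub_eq_inner_gramResidual hker hh hinj (hnew _), hfdef,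
      Finset.sum_sub_distrib]
    ring
  have hgsum : |∑ i, g (xhat i)| ≤ L * G * σ :=
    calc |∑ i, g (xhat i)| ≤ ∑ i, |g (xhat i)| := Finset.abs_sum_le_sum_abs _ _
      _ ≤ ∑ _i : Fin L, G * σ := Finset.sum_le_sum fun i _ => hg (xhat i)
      _ = L * G * σ := by simp; ring
  rw [hdev]
  calc |⟪wh, e⟫ + ∑ i, g (xhat i)| ≤ ‖wh‖ * ‖e‖ + L * G * σ :=
        (abs_add_le _ _).trans (add_le_add (abs_real_inner_le_norm wh e) hgsum)
    _ ≤ _ := by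
        gcongr
        exact Real.le_sqrt_of_sq_le (norm_sum_gramResidual_sq_le hker hinj hnew)

/-- Lemma 11 (perturbation setting, batch deviation bound):
`|Σᵢ m̂_t(x̂ᵢ) − Σᵢ f(x̂ᵢ)| ≤ ‖w_h‖·√(𝟙ᵀA𝟙 + L²σ²) + L·G·σ`. -/
theorem statement_17 [DecidableEq X]
    (φ : X → H) (ψ : X → H')
    (σ : ℝ) (hσ : 0 < σ)
    (hker : ∀ a b : X, (⟪ψ a, ψ b⟫ : ℝ) = ⟪φ a, φ b⟫ + σ ^ 2 * (if a = b then 1 else 0))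
    (wh : H') (hfun : X → ℝ) (hh : ∀ a, hfun a = ⟪wh, ψ a⟫)
    (g : X → ℝ) (G : ℝ) (hG : 0 ≤ G) (hg : ∀ a : X, |g a| ≤ G * σ)
    (f : X → ℝ) (hfdef : ∀ a, f a = hfun a - g a)
    (t L : ℕ) (xs : Fin t → X) (hinj : Function.Injective xs)
    (xhat : Fin L → X) (hnew : ∀ (i : Fin L) (j : Fin t), xhat i ≠ xs j) :
    |∑ i, rmeanFn σ φ hfun xs (xhat i) - ∑ i, f (xhat i)| ≤
      ‖wh‖ * Real.sqrt ((∑ i, ∑ j, rcovMat σ φ xs xhat i j) + (L : ℝ) ^ 2 * σ ^ 2) +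
        (L : ℝ) * G * σ :=
  statement_17_general φ ψ σ hker wh hfun hh g G hg f hfdef t L xs hinj xhat hnew
end
end
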